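/- arXiv:1205.1138 — 2 statements merged into one kernel-verified Lean document; each statement's English description precedes it below -/
import Mathlib

section
/- Suppose for some λ ∈ K the map λE + A : M → V is bijective. Then the quotient map [A] : M/M' → V/V' is surjective (hence bijective), where V' = range E and M' = A⁻¹(V'). -/
/-! If `v = λ • E m + A m`, then `[A] [m] = [v]` because `v - A m = E (λ • m)` lies in `range E`. -/

theorem LinearMap.surjective_mapQ_comap_range_of_surjective_smul_add {R M V : Type*} [CommRing R]
    [AddCommGroup M] [Module R M] [AddCommGroup V] [Module R V] (E A : M →ₗ[R] V) (lam : R)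
    (hsurj : Function.Surjective (lam • E + A)) :
    Function.Surjective
      (Submodule.mapQ (Submodule.comap A (LinearMap.range E)) (LinearMap.range E) A le_rfl) := by
  rintro ⟨v⟩
  obtain ⟨m, rfl⟩ := hsurj v
  refine ⟨Submodule.Quotient.mk m, (Submodule.Quotient.eq _).2 ⟨(-lam) • m, ?_⟩⟩
  simp [map_smul, neg_smul]

theorem stmt_16_general {K : Type*} [Field K] {M V : Type*} [AddCommGroup M] [Module K M]
    [AddCommGroup V] [Module K V]
    (E A : M →ₗ[K] V)
    (h : ∃ lam : K, Function.Bijective (lam • E + A)) :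
    Function.Surjective
      (Submodule.mapQ (Submodule.comap A (LinearMap.range E)) (LinearMap.range E) A le_rfl) := by
  obtain ⟨lam, hbij⟩ := h
  exact E.surjective_mapQ_comap_range_of_surjective_smul_add A lam hbij.surjective

theorem stmt_16 {K : Type*} [Field K] {M V : Type*} [AddCommGroup M] [Module K M]
    [AddCommGroup V] [Module K V] [FiniteDimensional K M] [FiniteDimensional K V]
    (E A : M →ₗ[K] V)
    (h : ∃ lam : K, Function.Bijective (lam • E + A)) :
    Function.Surjective
      (Submodule.mapQ (Submodule.comap A (LinearMap.range E)) (LinearMap.range E) A le_rfl) :=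
  stmt_16_general E A h
end

section
/- If (E,A) is a regular pencil (∃ λ, λE + A bijective), and (E',A') is its reduction (restrictions to M' = A⁻¹(range E) with codomain V' = range E), then (E',A') is a regular pencil: there exists λ with λE' + A' : M' → V' bijective. -/
open Function

namespace LinearMap

theorem bijective_restrict_of_mem_iff {R M N : Type*} [Semiring R] [AddCommMonoid M] [Module R M]
    [AddCommMonoid N] [Module R N] {f : M →ₗ[R] N} (hf : Bijective f) {p : Submodule R M}
    {q : Submodule R N} (hpq : ∀ x, x ∈ p ↔ f x ∈ q) :
    Bijective (f.restrict fun x hx => (hpq x).1 hx) := by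
  refine ⟨fun x y hxy => Subtype.ext (hf.1 (congrArg Subtype.val hxy)), fun ⟨y, hy⟩ => ?_⟩
  obtain ⟨x, rfl⟩ := hf.2 y
  exact ⟨⟨x, (hpq x).2 hy⟩, rfl⟩

theorem comap_smul_add_eq_comap {R M N : Type*} [CommRing R] [AddCommGroup M] [Module R M]
    [AddCommGroup N] [Module R N] {E : M →ₗ[R] N} {q : Submodule R N} (hE : range E ≤ q)
    (A : M →ₗ[R] N) (c : R) : q.comap (c • E + A) = q.comap A := by
  ext x
  exact q.add_mem_iff_right (q.smul_mem c (hE (mem_range_self E x)))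

end LinearMap

theorem stmt_19_general {K : Type*} [Field K] {M V : Type*} [AddCommGroup M] [Module K M]
    [AddCommGroup V] [Module K V]
    (E A : M →ₗ[K] V)
    (hreg : ∃ lam : K, Function.Bijective (lam • E + A)) :
    ∃ mu : K,
      Function.Bijective
        (mu • E.restrict (p := Submodule.comap A (LinearMap.range E)) (q := LinearMap.range E)
            (fun x _ => LinearMap.mem_range_self E x) +
          A.restrict (p := Submodule.comap A (LinearMap.range E)) (q := LinearMap.range E)
            (fun _ hx => hx)) := by
  obtain ⟨lam, hbij⟩ := hreg
  exact ⟨lam, LinearMap.bijective_restrict_of_mem_iff hbij fun x =>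
    (SetLike.ext_iff.mp (LinearMap.comap_smul_add_eq_comap le_rfl A lam) x).symm⟩

theorem stmt_19 {K : Type*} [Field K] [Infinite K] {M V : Type*} [AddCommGroup M] [Module K M]
    [AddCommGroup V] [Module K V] [FiniteDimensional K M] [FiniteDimensional K V]
    (E A : M →ₗ[K] V)
    (hreg : ∃ lam : K, Function.Bijective (lam • E + A)) :
    ∃ mu : K,
      Function.Bijective
        (mu • E.restrict (p := Submodule.comap A (LinearMap.range E)) (q := LinearMap.range E)
            (fun x _ => LinearMap.mem_range_self E x) +
          A.restrict (p := Submodule.comap A (LinearMap.range E)) (q := LinearMap.range E)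
            (fun _ hx => hx)) :=
  stmt_19_general E A hreg
end
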